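/- Fix an integer m ≥ 2 and p ∈ (0,1). With S = Fin m, Q = Bool × Fin m, the Ising channel P(y|x,s) (equal to 1 if x = s = y, 1/2 if x ≠ s and y ∈ {x,s}, 0 otherwise), the stationary distribution π(s,(1,q_s)) = (2/(m(p+3)))·1[q_s = s], π(s,(0,q_s)) = 2p/(m(p+3)) if q_s = s and (1-p)/(m(m-1)(p+3)) otherwise, and the input distribution u(x|s,(1,s)) = p·1[x=s] + ((1-p)/(m-1))·1[x≠s], u(x|s,(0,q_s)) = 1[x = s] (u arbitrary stochastic at nodes (1,q_s) with q_s ≠ s): the conditional entropy H(Y|X,S) := −Σ_{s,q,x,y} π(s,q)·u(x|s,q)·P(y|x,s)·log₂ P(y|x,s) equals 2(1-p)/(p+3). -/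

import Mathlib

/-- The Ising channel law `P(y|x,s)`. -/
noncomputable def IsingP {m : ℕ} (y x s : Fin m) : ℝ :=
  if x = s then (if y = s then 1 else 0)
  else if y = x ∨ y = s then 1 / 2 else 0

/-- The stationary distribution `π` on `S × Q`: `π(s,(1,q_s)) = (2/(m(p+3)))·1[q_s=s]`,
`π(s,(0,q_s)) = 2p/(m(p+3))` if `q_s = s` and `(1-p)/(m(m-1)(p+3))` otherwise. -/
noncomputable def statDist (p : ℝ) {m : ℕ} (sq : Fin m × (Bool × Fin m)) : ℝ :=
  if sq.2.1 then (if sq.2.2 = sq.1 then 2 / (m * (p + 3)) else 0)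
  else (if sq.2.2 = sq.1 then 2 * p / (m * (p + 3))
        else (1 - p) / (m * ((m : ℝ) - 1) * (p + 3)))

/-! Given `(x, s)`, the channel output is determined when `x = s` and is a fair coin on `{x, s}`
otherwise, so the inner sum over `y` equals `-1[x ≠ s]`. As `u(·|s,q)` is stochastic, the sum over
`x` then gives `u(s|s,q) - 1`, which vanishes at the nodes `(0, q)` (where the input copies the
state) and equals `p - 1` at `(1, s)`; weighting by `π(s,(1,s)) = 2/(m(p+3))` and summing over the
`m` states gives `2(p - 1)/(p + 3)`. -/

open Finset Real

theorem sum_isingP_mul_logb {m : ℕ} (x s : Fin m) :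
    ∑ y, IsingP y x s * logb 2 (IsingP y x s) = if x = s then 0 else -1 := by
  by_cases hxs : x = s
  · subst hxs
    simp only [IsingP, if_true]
    exact sum_eq_zero fun y _ => by split_ifs <;> simp
  · have logb_half : logb 2 (1 / 2 : ℝ) = -1 := by simp
    rw [sum_eq_add_of_mem x s (mem_univ x) (mem_univ s) hxs fun y _ hy => by
      simp [IsingP, hxs, hy.1, hy.2]]
    norm_num [IsingP, hxs, Ne.symm hxs, logb_half]

theorem sum_mul_sum_isingP_mul_logb {m : ℕ} (w : Fin m → ℝ) (hw : ∑ x, w x = 1) (s : Fin m) :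
    ∑ x, w x * ∑ y, IsingP y x s * logb 2 (IsingP y x s) = w s - 1 := by
  have indicator_sub_one : ∀ x : Fin m,
      (if x = s then (0 : ℝ) else -1) = (if x = s then 1 else 0) - 1 := fun x => by
    split_ifs <;> norm_num
  simp only [sum_isingP_mul_logb, indicator_sub_one, mul_sub, mul_ite, mul_one, mul_zero,
    sum_sub_distrib, sum_ite_eq', mem_univ, if_true, hw]

theorem sum_statDist_mul_sub_one {m : ℕ} (p : ℝ) (s : Fin m) (w : Bool × Fin m → ℝ)
    (h_true : w (true, s) = p) (h_false : ∀ q, w (false, q) = 1) :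
    ∑ q, statDist p (s, q) * (w q - 1) = 2 * (p - 1) / (m * (p + 3)) := by
  simp only [Fintype.sum_prod_type, Fintype.sum_bool, statDist, h_false, sub_self, mul_zero,
    ite_self, ite_mul, zero_mul, sum_ite_eq', mem_univ, if_true, h_true, sum_const_zero]
  ring

theorem ising_entropy_Y_given_XS_general (m : ℕ) (hm : 2 ≤ m) (p : ℝ)
    (hp : p ∈ Set.Ioo (0 : ℝ) 1)
    (u : Fin m → Fin m → Bool × Fin m → ℝ)
    (hu_sum : ∀ s q, ∑ x : Fin m, u x s q = 1)
    (hu_known : ∀ s x : Fin m,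
      u x s (true, s) = if x = s then p else (1 - p) / ((m : ℝ) - 1))
    (hu_unknown : ∀ (s qs x : Fin m),
      u x s (false, qs) = if x = s then 1 else 0) :
    -(∑ s : Fin m, ∑ q : Bool × Fin m, ∑ x : Fin m, ∑ y : Fin m,
        statDist p (s, q) * u x s q * IsingP y x s * Real.logb 2 (IsingP y x s))
      = 2 * (1 - p) / (p + 3) := by
  have per_state (s : Fin m) : ∑ q, ∑ x, ∑ y,
      statDist p (s, q) * u x s q * IsingP y x s * logb 2 (IsingP y x s)
        = 2 * (p - 1) / (m * (p + 3)) := by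
    calc _ = ∑ q, statDist p (s, q) * (u s s q - 1) := by
          refine sum_congr rfl fun q _ => ?_
          simp only [← sum_mul_sum_isingP_mul_logb (u · s q) (hu_sum s q), mul_sum, mul_assoc]
      _ = _ := sum_statDist_mul_sub_one p s (u s s) (by simp [hu_known])
          fun q => by simp [hu_unknown]
  have hm0 : (m : ℝ) ≠ 0 := Nat.cast_ne_zero.mpr (by omega)
  have hp3 : p + 3 ≠ 0 := by linarith [hp.1]
  rw [sum_congr rfl fun s _ => per_state s, sum_const, card_univ, Fintype.card_fin, nsmul_eq_mul]
  field_simp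
  ring

/-- computation of `H(Y|X,S)` in Lemma 2 of the paper: with the
stationary distribution `π`, and any stochastic input distribution `u` with
`u(x|s,(1,s)) = p·1[x=s] + ((1-p)/(m-1))·1[x≠s]` and `u(x|s,(0,q_s)) = 1[x=s]`
(arbitrary stochastic at nodes `(1,q_s)` with `q_s ≠ s`), the conditional entropy
`H(Y|X,S) = -Σ_{s,q,x,y} π(s,q)u(x|s,q)P(y|x,s)log₂ P(y|x,s)` equals
`2(1-p)/(p+3)` (convention `0·log₂ 0 = 0`, automatic since `Real.log 0 = 0`). -/
theorem ising_entropy_Y_given_XS (m : ℕ) (hm : 2 ≤ m) (p : ℝ)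
    (hp : p ∈ Set.Ioo (0 : ℝ) 1)
    (u : Fin m → Fin m → Bool × Fin m → ℝ)
    (hu_nonneg : ∀ x s q, 0 ≤ u x s q)
    (hu_sum : ∀ s q, ∑ x : Fin m, u x s q = 1)
    (hu_known : ∀ s x : Fin m,
      u x s (true, s) = if x = s then p else (1 - p) / ((m : ℝ) - 1))
    (hu_unknown : ∀ (s qs x : Fin m),
      u x s (false, qs) = if x = s then 1 else 0) :
    -(∑ s : Fin m, ∑ q : Bool × Fin m, ∑ x : Fin m, ∑ y : Fin m,
        statDist p (s, q) * u x s q * IsingP y x s * Real.logb 2 (IsingP y x s))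
      = 2 * (1 - p) / (p + 3) :=
  ising_entropy_Y_given_XS_general m hm p hp u hu_sum hu_known hu_unknown
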